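/- arXiv:0705.0500 — 2 statements merged into one kernel-verified Lean document; each statement's English description precedes it below -/
import Mathlib

section
/- For every real x < 0 and all integers p, q, the one-sided limits lim_{t→0⁺} [ Li₂(x+it) + (1/2)(Log(x+it) + 2πi·p)(Log(1−(x+it)) + 2πi·q) ] and lim_{t→0⁺} [ Li₂(x−it) + (1/2)(Log(x−it) + 2πi·(p+1))(Log(1−(x−it)) + 2πi·q) ] exist and are equal as complex numbers. (This is the well-definedness of the extended Rogers dilogarithm across the cut (−∞,0).) -/
open Complex Filter Set
open Topology

noncomputable section

/-- The dilogarithm `Li₂`, defined by the integral formula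
`Li₂(z) = -∫₀¹ Log(1 - z t)/t dt` (the analytic continuation on `ℂ ∖ [1,∞)` of
`∑_{k≥1} z^k/k²`). -/
def Li2 (z : ℂ) : ℂ := -∫ t in (0:ℝ)..1, Complex.log (1 - z * t) / t

/-- Auxiliary: `log(1-w)/w` with the removable singularity filled in. -/
def li2Aux (w : ℂ) : ℂ := if w = 0 then -1 else Complex.log (1 - w) / w

lemma li2Aux_continuousOn : ContinuousOn li2Aux {w : ℂ | w.re < 1} := by
  intro w hw
  by_cases hw0 : w = 0
  · subst hw0
    have hder : HasDerivAt (fun u : ℂ => Complex.log (1 - u)) (-1) 0 := by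
      have h1 : HasDerivAt (fun u : ℂ => (1:ℂ) - u) (-1) 0 := (hasDerivAt_id 0).const_sub 1
      have h2 : HasDerivAt Complex.log (((1:ℂ) - 0)⁻¹) ((1:ℂ) - 0) := by
        apply Complex.hasDerivAt_log
        rw [Complex.mem_slitPlane_iff]
        norm_num
      have := h2.comp 0 h1
      have h3 : ((1:ℂ) - 0)⁻¹ * (-1) = -1 := by simp
      rw [h3] at this; exact this
    have hslope := hasDerivAt_iff_tendsto_slope.mp hder
    have heq : ∀ᶠ u in 𝓝[≠] (0:ℂ), slope (fun u : ℂ => Complex.log (1 - u)) 0 u = li2Aux u := by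
      filter_upwards [self_mem_nhdsWithin] with u hu
      have hu0 : u ≠ 0 := hu
      simp [slope, li2Aux, hu0, Complex.log_one, div_eq_inv_mul]
    have h3 : Tendsto li2Aux (𝓝[≠] (0:ℂ)) (𝓝 (-1)) := hslope.congr' heq
    have h4 : ContinuousAt li2Aux 0 := by
      rw [← continuousWithinAt_compl_self]
      have h5 : li2Aux 0 = -1 := by simp [li2Aux]
      rw [ContinuousWithinAt, h5]
      exact h3
    exact h4.continuousWithinAt
  · have hcont : ContinuousAt (fun u : ℂ => Complex.log (1 - u) / u) w := by
      refine ContinuousAt.div ?_ continuousAt_id hw0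
      refine (continuousAt_clog ?_).comp (by fun_prop)
      rw [Complex.mem_slitPlane_iff]
      left
      simp only [Complex.sub_re, Complex.one_re]
      have : w.re < 1 := hw
      linarith
    have heq : (fun u : ℂ => Complex.log (1 - u) / u) =ᶠ[𝓝 w] li2Aux := by
      filter_upwards [isOpen_compl_singleton.mem_nhds (by exact hw0 : w ∈ ({0}ᶜ : Set ℂ))] with u hu
      have hu' : u ≠ 0 := hu
      simp [li2Aux, hu']
    exact (hcont.congr heq).continuousWithinAt

lemma li2_eq (z : ℂ) : Li2 z = -(z * ∫ t in (0:ℝ)..1, li2Aux (z * t)) := by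
  rw [Li2, ← intervalIntegral.integral_const_mul]
  congr 1
  apply intervalIntegral.integral_congr_ae
  filter_upwards with t ht
  rw [Set.uIoc_of_le (by norm_num : (0:ℝ) ≤ 1)] at ht
  have ht0 : (t:ℂ) ≠ 0 := by exact_mod_cast ne_of_gt ht.1
  by_cases hz : z = 0
  · simp [hz, li2Aux]
  · have hzt : z * (t:ℂ) ≠ 0 := mul_ne_zero hz ht0
    simp only [li2Aux, hzt, if_false]
    field_simp

lemma re_mul_ofReal_le {z : ℂ} {t : ℝ} (hz : z.re ≤ 1/2) (ht0 : 0 ≤ t) (ht1 : t ≤ 1) :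
    (z * (t:ℂ)).re ≤ 1/2 := by
  have : (z * (t:ℂ)).re = z.re * t := by simp [Complex.mul_re]
  rw [this]
  nlinarith [mul_nonneg (sub_nonneg.2 hz) ht0]

lemma li2_tendsto (x : ℝ) (hx : x < 0) :
    Tendsto Li2 (𝓝 (x:ℂ)) (𝓝 (Li2 (x:ℂ))) := by
  set K : Set ℂ := {w : ℂ | ‖w‖ ≤ |x| + 1 ∧ w.re ≤ 1/2} with hK
  have hKc : IsCompact K := by
    have : K = Metric.closedBall (0:ℂ) (|x| + 1) ∩ {w : ℂ | w.re ≤ 1/2} := by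
      ext w; simp [hK, Metric.mem_closedBall, Complex.dist_eq]
    rw [this]
    exact (isCompact_closedBall _ _).inter_right (isClosed_le Complex.continuous_re continuous_const)
  have hKU : K ⊆ {w : ℂ | w.re < 1} := fun w hw => lt_of_le_of_lt hw.2 (by norm_num)
  obtain ⟨C, hC⟩ := hKc.exists_bound_of_continuousOn (li2Aux_continuousOn.mono hKU)
  have hball : Metric.closedBall (x:ℂ) (1/2) ∈ 𝓝 (x:ℂ) :=
    Metric.closedBall_mem_nhds _ (by norm_num)
  have hzprop : ∀ z ∈ Metric.closedBall (x:ℂ) (1/2), ‖z‖ ≤ |x| + 1 ∧ z.re ≤ 1/2 := by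
    intro z hz
    rw [Metric.mem_closedBall, Complex.dist_eq] at hz
    constructor
    · calc ‖z‖ = ‖z - x + x‖ := by simp
        _ ≤ ‖z - x‖ + ‖(x:ℂ)‖ := norm_add_le _ _
        _ ≤ 1/2 + |x| := by rw [Complex.norm_real, Real.norm_eq_abs]; linarith
        _ ≤ |x| + 1 := by linarith
    · have h1 : |z.re - x| ≤ ‖z - x‖ := by
        have := Complex.abs_re_le_norm (z - x)
        simpa [Complex.sub_re] using this
      have := abs_le.mp (le_trans h1 hz)
      linarith
  have hmem : ∀ z ∈ Metric.closedBall (x:ℂ) (1/2), ∀ t ∈ Set.Ioc (0:ℝ) 1, z * t ∈ K := by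
    intro z hz t ht
    obtain ⟨hn, hr⟩ := hzprop z hz
    constructor
    · calc ‖z * (t:ℂ)‖ = ‖z‖ * |t| := by simp [Complex.norm_real]
        _ ≤ (|x| + 1) * 1 := by
            apply mul_le_mul hn _ (abs_nonneg t) (by positivity)
            rw [abs_of_pos ht.1]; exact ht.2
        _ = |x| + 1 := mul_one _
    · exact re_mul_ofReal_le hr ht.1.le ht.2
  have hopen : IsOpen {w : ℂ | w.re < 1} := isOpen_lt Complex.continuous_re continuous_const
  have htend : Tendsto (fun z : ℂ => ∫ t in (0:ℝ)..1, li2Aux (z * t)) (𝓝 (x:ℂ))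
      (𝓝 (∫ t in (0:ℝ)..1, li2Aux ((x:ℂ) * t))) := by
    apply intervalIntegral.tendsto_integral_filter_of_dominated_convergence (fun _ => C)
    · filter_upwards [hball] with z hz
      apply ContinuousOn.aestronglyMeasurable _ measurableSet_uIoc
      rw [Set.uIoc_of_le (by norm_num : (0:ℝ) ≤ 1)]
      refine li2Aux_continuousOn.comp (by fun_prop) ?_
      intro t ht
      exact hKU (hmem z hz t ht)
    · filter_upwards [hball] with z hz
      filter_upwards with t ht
      rw [Set.uIoc_of_le (by norm_num : (0:ℝ) ≤ 1)] at ht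
      exact hC _ (hmem z hz t ht)
    · exact intervalIntegrable_const
    · filter_upwards with t ht
      rw [Set.uIoc_of_le (by norm_num : (0:ℝ) ≤ 1)] at ht
      have hxt : (x:ℂ) * t ∈ {w : ℂ | w.re < 1} := by
        have : ((x:ℂ) * (t:ℂ)).re = x * t := by simp [Complex.mul_re]
        simp only [Set.mem_setOf_eq, this]
        nlinarith [ht.1, ht.2, hx]
      exact Filter.Tendsto.comp (li2Aux_continuousOn.continuousAt (hopen.mem_nhds hxt))
        ((continuous_mul_right ((t:ℝ):ℂ)).tendsto (x:ℂ))
  have : Tendsto (fun z : ℂ => -(z * ∫ t in (0:ℝ)..1, li2Aux (z * t))) (𝓝 (x:ℂ))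
      (𝓝 (-((x:ℂ) * ∫ t in (0:ℝ)..1, li2Aux ((x:ℂ) * t)))) :=
    (tendsto_id.mul htend).neg
  simpa only [← li2_eq] using this

/-- For `x < 0`, the one-sided limits of
`Li₂(x±it) + ½(Log(x±it) + 2πi p±)(Log(1−(x±it)) + 2πi q)` as `t → 0⁺`, with `p₊ = p` and
`p₋ = p+1`, exist and are equal: well-definedness of the extended Rogers dilogarithm across
the cut `(−∞,0)`. -/
theorem rogers_welldefined_neg_cut (x : ℝ) (hx : x < 0) (p q : ℤ) :
    ∃ Lp Lm : ℂ,
      Tendsto (fun t : ℝ =>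
          Li2 ((x : ℂ) + (t : ℂ) * Complex.I)
            + (1/2) * (Complex.log ((x : ℂ) + (t : ℂ) * Complex.I)
                + 2 * Real.pi * Complex.I * p)
              * (Complex.log (1 - ((x : ℂ) + (t : ℂ) * Complex.I))
                + 2 * Real.pi * Complex.I * q))
        (nhdsWithin 0 (Set.Ioi 0)) (nhds Lp) ∧
      Tendsto (fun t : ℝ =>
          Li2 ((x : ℂ) - (t : ℂ) * Complex.I)
            + (1/2) * (Complex.log ((x : ℂ) - (t : ℂ) * Complex.I)
                + 2 * Real.pi * Complex.I * ((p : ℂ) + 1))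
              * (Complex.log (1 - ((x : ℂ) - (t : ℂ) * Complex.I))
                + 2 * Real.pi * Complex.I * q))
        (nhdsWithin 0 (Set.Ioi 0)) (nhds Lm) ∧
      Lp = Lm := by
  have hre : ((x:ℂ)).re < 0 := by simpa using hx
  have him : ((x:ℂ)).im = 0 := by simp
  have hpathP : Tendsto (fun t : ℝ => (x:ℂ) + (t:ℂ) * Complex.I) (𝓝[>] 0) (𝓝 (x:ℂ)) := by
    have hc : Continuous fun t : ℝ => (x:ℂ) + (t:ℂ) * Complex.I := by fun_prop
    have := (hc.tendsto 0).mono_left (nhdsWithin_le_nhds : 𝓝[>] (0:ℝ) ≤ 𝓝 0)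
    simpa using this
  have hpathM : Tendsto (fun t : ℝ => (x:ℂ) - (t:ℂ) * Complex.I) (𝓝[>] 0) (𝓝 (x:ℂ)) := by
    have hc : Continuous fun t : ℝ => (x:ℂ) - (t:ℂ) * Complex.I := by fun_prop
    have := (hc.tendsto 0).mono_left (nhdsWithin_le_nhds : 𝓝[>] (0:ℝ) ≤ 𝓝 0)
    simpa using this
  have hpathP' : Tendsto (fun t : ℝ => (x:ℂ) + (t:ℂ) * Complex.I) (𝓝[>] 0)
      (𝓝[{z : ℂ | 0 ≤ z.im}] (x:ℂ)) := by
    rw [tendsto_nhdsWithin_iff]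
    refine ⟨hpathP, ?_⟩
    filter_upwards [self_mem_nhdsWithin] with t ht
    simpa using le_of_lt (ht : (0:ℝ) < t)
  have hpathM' : Tendsto (fun t : ℝ => (x:ℂ) - (t:ℂ) * Complex.I) (𝓝[>] 0)
      (𝓝[{z : ℂ | z.im < 0}] (x:ℂ)) := by
    rw [tendsto_nhdsWithin_iff]
    refine ⟨hpathM, ?_⟩
    filter_upwards [self_mem_nhdsWithin] with t ht
    simpa using (ht : (0:ℝ) < t)
  have hlogP : Tendsto (fun t : ℝ => Complex.log ((x:ℂ) + (t:ℂ) * Complex.I)) (𝓝[>] 0)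
      (𝓝 ((Real.log (‖(x:ℂ)‖) : ℂ) + Real.pi * Complex.I)) :=
    (Complex.tendsto_log_nhdsWithin_im_nonneg_of_re_neg_of_im_zero hre him).comp hpathP'
  have hlogM : Tendsto (fun t : ℝ => Complex.log ((x:ℂ) - (t:ℂ) * Complex.I)) (𝓝[>] 0)
      (𝓝 ((Real.log (‖(x:ℂ)‖) : ℂ) - Real.pi * Complex.I)) :=
    (Complex.tendsto_log_nhdsWithin_im_neg_of_re_neg_of_im_zero hre him).comp hpathM'
  have hslit : (1 - (x:ℂ)) ∈ Complex.slitPlane := by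
    rw [Complex.mem_slitPlane_iff]
    left
    simp only [Complex.sub_re, Complex.one_re, Complex.ofReal_re]
    linarith
  have hlog1P : Tendsto (fun t : ℝ => Complex.log (1 - ((x:ℂ) + (t:ℂ) * Complex.I))) (𝓝[>] 0)
      (𝓝 (Complex.log (1 - (x:ℂ)))) :=
    ((continuousAt_clog hslit).tendsto).comp (hpathP.const_sub 1)
  have hlog1M : Tendsto (fun t : ℝ => Complex.log (1 - ((x:ℂ) - (t:ℂ) * Complex.I))) (𝓝[>] 0)
      (𝓝 (Complex.log (1 - (x:ℂ)))) :=
    ((continuousAt_clog hslit).tendsto).comp (hpathM.const_sub 1)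
  have hli2P : Tendsto (fun t : ℝ => Li2 ((x:ℂ) + (t:ℂ) * Complex.I)) (𝓝[>] 0)
      (𝓝 (Li2 (x:ℂ))) := (li2_tendsto x hx).comp hpathP
  have hli2M : Tendsto (fun t : ℝ => Li2 ((x:ℂ) - (t:ℂ) * Complex.I)) (𝓝[>] 0)
      (𝓝 (Li2 (x:ℂ))) := (li2_tendsto x hx).comp hpathM
  refine ⟨Li2 (x:ℂ) + (1/2) * (((Real.log (‖(x:ℂ)‖) : ℂ) + Real.pi * Complex.I)
      + 2 * Real.pi * Complex.I * p) * (Complex.log (1 - (x:ℂ)) + 2 * Real.pi * Complex.I * q),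
    Li2 (x:ℂ) + (1/2) * (((Real.log (‖(x:ℂ)‖) : ℂ) - Real.pi * Complex.I)
      + 2 * Real.pi * Complex.I * ((p:ℂ) + 1)) * (Complex.log (1 - (x:ℂ))
      + 2 * Real.pi * Complex.I * q), ?_, ?_, by ring⟩
  · exact hli2P.add ((tendsto_const_nhds.mul (hlogP.add tendsto_const_nhds)).mul
      (hlog1P.add tendsto_const_nhds))
  · exact hli2M.add ((tendsto_const_nhds.mul (hlogM.add tendsto_const_nhds)).mul
      (hlog1M.add tendsto_const_nhds))


end
end

section
/- For every real x > 1 and all integers p, q, the one-sided limits below exist and satisfy lim_{t→0⁺} [ Li₂(x+it) + (1/2)(Log(x+it) + 2πi·p)(Log(1−(x+it)) + 2πi·q) ] = lim_{t→0⁺} [ Li₂(x−it) + (1/2)(Log(x−it) + 2πi·p)(Log(1−(x−it)) + 2πi·(q+1)) ] + 4π²·p. In particular the two limits are congruent modulo 4π²ℤ. (This is the well-definedness modulo 4π²ℤ of the extended Rogers dilogarithm across the cut (1,∞).) -/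
open Complex Filter Set
open MeasureTheory intervalIntegral

section RogersAux

lemma integrableOn_log_Ioc {B : ℝ} (hB : 0 ≤ B) : IntegrableOn Real.log (Ioc 0 B) := by
  have hbd : IntegrableOn (fun t : ℝ => 2 * t ^ (-(1/2) : ℝ) + |t|) (Ioc 0 B) := by
    have h1 : IntervalIntegrable (fun t : ℝ => t ^ (-(1/2) : ℝ)) volume 0 B :=
      intervalIntegrable_rpow' (by norm_num)
    have h2 : IntervalIntegrable (fun t : ℝ => |t|) volume 0 B :=
      (continuous_abs.intervalIntegrable 0 B)
    have := ((h1.const_mul 2).add h2)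
    rwa [intervalIntegrable_iff_integrableOn_Ioc_of_le hB] at this
  refine Integrable.mono' hbd Real.measurable_log.aestronglyMeasurable ?_
  refine (ae_restrict_iff' measurableSet_Ioc).2 (Filter.Eventually.of_forall ?_)
  intro t ht
  rcases ht with ⟨ht0, htB⟩
  have hrp : (0:ℝ) < t ^ (-(1/2) : ℝ) := Real.rpow_pos_of_pos ht0 _
  rcases le_or_gt 1 t with h1 | h1
  · have := Real.log_le_sub_one_of_pos ht0
    have h0 : 0 ≤ Real.log t := Real.log_nonneg h1
    rw [Real.norm_eq_abs, _root_.abs_of_nonneg h0]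
    have : Real.log t ≤ |t| := by
      rw [_root_.abs_of_nonneg ht0.le]; linarith
    nlinarith
  · have h0 : Real.log t ≤ 0 := Real.log_nonpos ht0.le h1.le
    rw [Real.norm_eq_abs, _root_.abs_of_nonpos h0]
    have hl : Real.log (t ^ (-(1/2) : ℝ)) ≤ t ^ (-(1/2):ℝ) - 1 :=
      Real.log_le_sub_one_of_pos hrp
    rw [Real.log_rpow ht0] at hl
    have : 0 ≤ |t| := abs_nonneg t
    nlinarith

lemma integrableOn_logabs {x : ℝ} (hx : 1 < x) :
    IntegrableOn (fun t : ℝ => |Real.log (1 - x * t)|) (Ioc 0 1) := by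
  have hx0 : x ≠ 0 := by positivity
  have h1 : IntervalIntegrable Real.log volume 0 1 :=
    (intervalIntegrable_iff_integrableOn_Ioc_of_le zero_le_one).2 (integrableOn_log_Ioc zero_le_one)
  have h2 : IntervalIntegrable Real.log volume 0 (x - 1) :=
    (intervalIntegrable_iff_integrableOn_Ioc_of_le (by linarith)).2
      (integrableOn_log_Ioc (by linarith))
  have h3 : IntervalIntegrable Real.log volume 0 (1 - x) := by
    have := h2.comp_sub_left 0
    simp only [zero_sub, Real.log_neg_eq_log, neg_sub, neg_zero] at this
    exact this
  have h4 : IntervalIntegrable Real.log volume (1 - x) 1 := h3.symm.trans h1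
  have h5 := (h4.comp_sub_left 1).comp_mul_left (c := x)
  simp only [sub_sub_cancel, sub_self, div_self hx0, zero_div] at h5
  have h6 : IntervalIntegrable (fun t : ℝ => |Real.log (1 - x * t)|) volume 0 1 := h5.symm.abs
  exact (intervalIntegrable_iff_integrableOn_Ioc_of_le zero_le_one).1 h6

noncomputable def rbound (x t : ℝ) : ℝ :=
  2*(x+1) + (Real.pi + Real.log (x+2) + |Real.log (1 - x*t)|) * (2*(x+1))

lemma integrableOn_rbound {x : ℝ} (hx : 1 < x) : IntegrableOn (rbound x) (Ioc 0 1) := by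
  unfold rbound
  apply Integrable.add
  · exact integrableOn_const measure_Ioc_lt_top.ne
  · apply Integrable.mul_const
    apply Integrable.add
    · exact integrableOn_const measure_Ioc_lt_top.ne
    · exact integrableOn_logabs hx

lemma norm_le_rbound {x : ℝ} (hx : 1 < x) {z : ℂ} (hre : z.re = x) (hz : ‖z‖ ≤ x + 1)
    {t : ℝ} (ht : t ∈ Ioc (0:ℝ) 1) (hne : x * t ≠ 1) :
    ‖Complex.log (1 - z * t) / t‖ ≤ rbound x t := by
  obtain ⟨ht0, ht1⟩ := ht
  have hx1 : (0:ℝ) < x + 1 := by linarith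
  have hlog2 : 0 ≤ Real.log (x+2) := Real.log_nonneg (by linarith)
  have hnt : ‖((t:ℝ) : ℂ)‖ = t := by
    rw [Complex.norm_real, Real.norm_eq_abs, _root_.abs_of_pos ht0]
  have hzt : ‖z * (t:ℂ)‖ ≤ (x+1) * t := by
    rw [norm_mul, hnt]
    exact mul_le_mul_of_nonneg_right hz ht0.le
  rw [norm_div, hnt]
  by_cases hts : t < (2*(x+1))⁻¹
  · have hhalf : ‖z * (t:ℂ)‖ ≤ 1/2 := by
      have : (x+1) * t ≤ (x+1) * (2*(x+1))⁻¹ := mul_le_mul_of_nonneg_left hts.le hx1.le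
      have h2 : (x+1) * (2*(x+1))⁻¹ = 1/2 := by field_simp
      linarith [hzt]
    have key : ‖Complex.log (1 - z * t)‖ ≤ 3/2 * ‖z * (t:ℂ)‖ := by
      have h := Complex.norm_log_one_add_half_le_self (z := -(z * (t:ℂ)))
        (by rwa [norm_neg])
      rw [norm_neg] at h
      rw [show (1 : ℂ) - z * t = 1 + -(z * t) by ring]
      exact h
    have hnum : ‖Complex.log (1 - z * t)‖ ≤ 2*(x+1) * t := by
      calc ‖Complex.log (1 - z * t)‖ ≤ 3/2 * ((x+1)*t) := le_trans key (by linarith)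
        _ ≤ 2*(x+1)*t := by nlinarith
    have h1 : ‖Complex.log (1 - z * t)‖ / t ≤ 2*(x+1) := by
      rw [div_le_iff₀ ht0]; linarith
    have h2 : 0 ≤ (Real.pi + Real.log (x+2) + |Real.log (1 - x*t)|) * (2*(x+1)) := by
      have := Real.pi_pos
      positivity
    unfold rbound; linarith
  · push_neg at hts
    set w : ℂ := 1 - z * t with hw
    have hA2 : |1 - x*t| ≤ ‖w‖ := by
      have hre' : w.re = 1 - x*t := by
        simp [hw, Complex.sub_re, Complex.mul_re, hre]
      calc |1 - x*t| = |w.re| := by rw [hre']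
        _ ≤ ‖w‖ := Complex.abs_re_le_norm w
    have h0 : (0:ℝ) < |1 - x*t| := by
      rw [abs_pos]
      intro h
      exact hne (by linarith)
    have hA1 : ‖w‖ ≤ x + 2 := by
      calc ‖w‖ ≤ ‖(1:ℂ)‖ + ‖z * (t:ℂ)‖ := norm_sub_le _ _
        _ ≤ 1 + (x+1)*t := by rw [norm_one]; linarith
        _ ≤ x + 2 := by nlinarith
    have hlogA : |Real.log ‖w‖| ≤ Real.log (x+2) + |Real.log (1 - x*t)| := by
      have e1 : Real.log ‖w‖ ≤ Real.log (x+2) := Real.log_le_log (lt_of_lt_of_le h0 hA2) hA1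
      have e2 : Real.log |1 - x*t| ≤ Real.log ‖w‖ := Real.log_le_log h0 hA2
      rw [Real.log_abs] at e2
      have := neg_abs_le (Real.log (1 - x*t))
      rw [abs_le]
      constructor <;> linarith [abs_nonneg (Real.log (1 - x*t))]
    have hnlog : ‖Complex.log w‖ ≤ Real.pi + Real.log (x+2) + |Real.log (1 - x*t)| := by
      have hdef : Complex.log w = (Real.log ‖w‖ : ℂ) + (Complex.arg w) * Complex.I :=
        rfl
      have harg : |Complex.arg w| ≤ Real.pi := Complex.abs_arg_le_pi w
      calc ‖Complex.log w‖ ≤ ‖(Real.log ‖w‖ : ℂ)‖ + ‖(Complex.arg w : ℂ) * Complex.I‖ := by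
            rw [hdef]; exact norm_add_le _ _
        _ = |Real.log ‖w‖| + |Complex.arg w| := by
            rw [norm_mul, Complex.norm_I, mul_one, Complex.norm_real, Complex.norm_real,
              Real.norm_eq_abs, Real.norm_eq_abs]
        _ ≤ Real.pi + Real.log (x+2) + |Real.log (1 - x*t)| := by linarith [hlogA]
    have hδ : (0:ℝ) < (2*(x+1))⁻¹ := by positivity
    have hfin : ‖Complex.log w‖ / t ≤
        (Real.pi + Real.log (x+2) + |Real.log (1 - x*t)|) / (2*(x+1))⁻¹ := by
      apply div_le_div₀ (by positivity) hnlog hδ hts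
    rw [div_eq_mul_inv _ ((2*(x+1))⁻¹), inv_inv] at hfin
    unfold rbound
    linarith

lemma aesm (z : ℂ) : AEStronglyMeasurable (fun t : ℝ => Complex.log (1 - z * t) / t)
    (volume.restrict (Ioc 0 1)) :=
  ((Complex.measurable_log.comp (measurable_const.sub
    (Complex.measurable_ofReal.const_mul z))).div Complex.measurable_ofReal).aestronglyMeasurable

lemma ae_ne_one {x : ℝ} (hx : 1 < x) :
    ∀ᵐ t ∂(volume.restrict (Ioc (0:ℝ) 1)), x * t ≠ 1 := by
  have hx0 : x ≠ 0 := by positivity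
  refine ae_iff.2 (measure_mono_null (t := {1/x}) ?_ ?_)
  · intro t ht
    simp only [mem_setOf_eq, not_not] at ht
    simp only [mem_singleton_iff]
    field_simp
    linarith [ht]
  · rw [Measure.restrict_apply (measurableSet_singleton _)]
    exact measure_mono_null inter_subset_left (measure_singleton _)

noncomputable def fplus (x t : ℝ) : ℂ :=
  Complex.log (1 - (x:ℂ) * t) / t
    - Set.indicator (Ioi (1/x)) (fun s : ℝ => 2 * Real.pi * Complex.I / s) t

lemma base_tendsto {x t : ℝ} (sgn : ℝ) :
    Tendsto (fun ε : ℝ => (1:ℂ) - ((x:ℂ) + (sgn * ε : ℝ) * Complex.I) * t) (nhdsWithin 0 (Ioi 0))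
      (nhds ((((1 - x*t : ℝ)) : ℂ))) := by
  have hc : Continuous (fun ε : ℝ => (1:ℂ) - ((x:ℂ) + (sgn * ε : ℝ) * Complex.I) * t) := by
    continuity
  have := hc.tendsto 0
  simp only [mul_zero, Complex.ofReal_zero, zero_mul, add_zero] at this
  have h2 : (1:ℂ) - (x:ℂ) * t = (((1 - x*t : ℝ)) : ℂ) := by push_cast; ring
  rw [h2] at this
  exact this.mono_left nhdsWithin_le_nhds

lemma base_plus (x t : ℝ) :
    Tendsto (fun ε : ℝ => (1:ℂ) - ((x:ℂ) + (ε:ℂ) * Complex.I) * t) (nhdsWithin 0 (Ioi 0))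
      (nhds ((((1 - x*t : ℝ)) : ℂ))) := by
  have hc : Continuous (fun ε : ℝ => (1:ℂ) - ((x:ℂ) + (ε:ℂ) * Complex.I) * t) := by continuity
  have h := hc.tendsto 0
  simp only [Complex.ofReal_zero, zero_mul, add_zero] at h
  have h2 : (1:ℂ) - (x:ℂ) * t = (((1 - x*t : ℝ)) : ℂ) := by push_cast; ring
  rw [h2] at h
  exact h.mono_left nhdsWithin_le_nhds

lemma base_minus (x t : ℝ) :
    Tendsto (fun ε : ℝ => (1:ℂ) - ((x:ℂ) - (ε:ℂ) * Complex.I) * t) (nhdsWithin 0 (Ioi 0))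
      (nhds ((((1 - x*t : ℝ)) : ℂ))) := by
  have hc : Continuous (fun ε : ℝ => (1:ℂ) - ((x:ℂ) - (ε:ℂ) * Complex.I) * t) := by continuity
  have h := hc.tendsto 0
  simp only [Complex.ofReal_zero, zero_mul, sub_zero] at h
  have h2 : (1:ℂ) - (x:ℂ) * t = (((1 - x*t : ℝ)) : ℂ) := by push_cast; ring
  rw [h2] at h
  exact h.mono_left nhdsWithin_le_nhds

lemma im_plus (x t ε : ℝ) : ((1:ℂ) - ((x:ℂ) + (ε:ℂ) * Complex.I) * t).im = -(ε * t) := by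
  simp [Complex.sub_im, Complex.add_im, Complex.mul_im]

lemma im_minus (x t ε : ℝ) : ((1:ℂ) - ((x:ℂ) - (ε:ℂ) * Complex.I) * t).im = ε * t := by
  simp [Complex.sub_im, Complex.mul_im]

lemma tendsto_plus {x t : ℝ} (hx : 1 < x) (ht : t ∈ Ioc (0:ℝ) 1) (hne : x * t ≠ 1) :
    Tendsto (fun ε : ℝ => Complex.log (1 - ((x:ℂ) + (ε:ℂ) * Complex.I) * t) / t)
      (nhdsWithin 0 (Ioi 0)) (nhds (fplus x t)) := by
  obtain ⟨ht0, ht1⟩ := ht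
  have hx0 : (0:ℝ) < x := by linarith
  rcases lt_or_gt_of_ne hne with hlt | hgt
  · -- x * t < 1 : continuity
    have hsl : (((1 - x*t : ℝ)) : ℂ) ∈ Complex.slitPlane := by
      left; simp only [Complex.ofReal_re]; linarith
    have h := ((continuousAt_clog hsl).tendsto.comp (base_plus x t)).div_const (t:ℂ)
    have heq : fplus x t = Complex.log (((1 - x*t : ℝ)) : ℂ) / t := by
      have hnotmem : t ∉ Ioi (1/x) := by
        simp only [mem_Ioi, not_lt]
        rw [le_div_iff₀ hx0]
        nlinarith
      rw [fplus, Set.indicator_of_notMem hnotmem, sub_zero]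
      congr 2
      push_cast; ring
    rw [heq]
    exact h
  · -- x * t > 1 : approach from below
    have hneg : (1 - x*t : ℝ) < 0 := by linarith
    have hre : ((((1 - x*t : ℝ)) : ℂ)).re < 0 := by simpa using hneg
    have him : ((((1 - x*t : ℝ)) : ℂ)).im = 0 := by simp
    have hlog := Complex.tendsto_log_nhdsWithin_im_neg_of_re_neg_of_im_zero hre him
    have hbase : Tendsto (fun ε : ℝ => (1:ℂ) - ((x:ℂ) + (ε:ℂ) * Complex.I) * t)
        (nhdsWithin 0 (Ioi 0)) (nhdsWithin (((1 - x*t : ℝ)) : ℂ) {z : ℂ | z.im < 0}) := by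
      rw [tendsto_nhdsWithin_iff]
      refine ⟨base_plus x t, ?_⟩
      filter_upwards [self_mem_nhdsWithin] with ε hε
      simp only [mem_setOf_eq, im_plus]
      have : (0:ℝ) < ε := hε
      nlinarith
    have h := (hlog.comp hbase).div_const (t:ℂ)
    have heq : fplus x t = ((Real.log |1 - x*t| : ℂ) - Real.pi * Complex.I) / t := by
      have hmem : t ∈ Ioi (1/x) := by
        simp only [mem_Ioi]
        rw [div_lt_iff₀ hx0]
        nlinarith
      rw [fplus, Set.indicator_of_mem hmem]
      have hlogval : Complex.log ((1:ℂ) - (x:ℂ) * t) = (Real.log |1 - x*t| : ℂ)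
          + Real.pi * Complex.I := by
        have hcast : (1:ℂ) - (x:ℂ) * t = (((1 - x*t : ℝ)) : ℂ) := by push_cast; ring
        rw [hcast, Complex.log, Complex.norm_real, Real.norm_eq_abs, Complex.arg_ofReal_of_neg hneg]
      rw [hlogval]
      have htne : (t:ℂ) ≠ 0 := Complex.ofReal_ne_zero.2 (ne_of_gt ht0)
      field_simp
      ring
    rw [heq]
    have habs : ‖(((1 - x*t : ℝ)) : ℂ)‖ = |1 - x*t| := by rw [Complex.norm_real, Real.norm_eq_abs]
    rw [habs] at h
    exact h

lemma tendsto_minus {x t : ℝ} (hx : 1 < x) (ht : t ∈ Ioc (0:ℝ) 1) (hne : x * t ≠ 1) :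
    Tendsto (fun ε : ℝ => Complex.log (1 - ((x:ℂ) - (ε:ℂ) * Complex.I) * t) / t)
      (nhdsWithin 0 (Ioi 0)) (nhds (Complex.log (1 - (x:ℂ) * t) / t)) := by
  obtain ⟨ht0, ht1⟩ := ht
  have hx0 : (0:ℝ) < x := by linarith
  have hcast : (1:ℂ) - (x:ℂ) * t = (((1 - x*t : ℝ)) : ℂ) := by push_cast; ring
  rcases lt_or_gt_of_ne hne with hlt | hgt
  · have hsl : (((1 - x*t : ℝ)) : ℂ) ∈ Complex.slitPlane := by
      left; simp only [Complex.ofReal_re]; linarith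
    have h := ((continuousAt_clog hsl).tendsto.comp (base_minus x t)).div_const (t:ℂ)
    rw [hcast]
    exact h
  · have hneg : (1 - x*t : ℝ) < 0 := by linarith
    have hre : ((((1 - x*t : ℝ)) : ℂ)).re < 0 := by simpa using hneg
    have him : ((((1 - x*t : ℝ)) : ℂ)).im = 0 := by simp
    have hlog := Complex.tendsto_log_nhdsWithin_im_nonneg_of_re_neg_of_im_zero hre him
    have hbase : Tendsto (fun ε : ℝ => (1:ℂ) - ((x:ℂ) - (ε:ℂ) * Complex.I) * t)
        (nhdsWithin 0 (Ioi 0)) (nhdsWithin (((1 - x*t : ℝ)) : ℂ) {z : ℂ | 0 ≤ z.im}) := by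
      rw [tendsto_nhdsWithin_iff]
      refine ⟨base_minus x t, ?_⟩
      filter_upwards [self_mem_nhdsWithin] with ε hε
      simp only [mem_setOf_eq, im_minus]
      have : (0:ℝ) < ε := hε
      nlinarith
    have h := (hlog.comp hbase).div_const (t:ℂ)
    have hlogval : Complex.log ((1:ℂ) - (x:ℂ) * t) = (Real.log ‖(((1 - x*t : ℝ)) : ℂ)‖ : ℂ)
        + Real.pi * Complex.I := by
      rw [hcast, Complex.log, Complex.arg_ofReal_of_neg hneg]
    rw [hlogval]
    exact h

lemma norm_z_plus (x ε : ℝ) (hε : ε ∈ Ioc (0:ℝ) 1) (hx : 1 < x) :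
    ‖(x:ℂ) + (ε:ℂ) * Complex.I‖ ≤ x + 1 := by
  calc ‖(x:ℂ) + (ε:ℂ) * Complex.I‖ ≤ ‖(x:ℂ)‖ + ‖(ε:ℂ) * Complex.I‖ := norm_add_le _ _
    _ = |x| + |ε| := by
        rw [norm_mul, Complex.norm_I, mul_one, Complex.norm_real, Complex.norm_real,
          Real.norm_eq_abs, Real.norm_eq_abs]
    _ ≤ x + 1 := by
        rw [_root_.abs_of_pos (by linarith : (0:ℝ) < x), _root_.abs_of_pos hε.1]
        linarith [hε.2]

lemma norm_z_minus (x ε : ℝ) (hε : ε ∈ Ioc (0:ℝ) 1) (hx : 1 < x) :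
    ‖(x:ℂ) - (ε:ℂ) * Complex.I‖ ≤ x + 1 := by
  calc ‖(x:ℂ) - (ε:ℂ) * Complex.I‖ ≤ ‖(x:ℂ)‖ + ‖(ε:ℂ) * Complex.I‖ := norm_sub_le _ _
    _ = |x| + |ε| := by
        rw [norm_mul, Complex.norm_I, mul_one, Complex.norm_real, Complex.norm_real,
          Real.norm_eq_abs, Real.norm_eq_abs]
    _ ≤ x + 1 := by
        rw [_root_.abs_of_pos (by linarith : (0:ℝ) < x), _root_.abs_of_pos hε.1]
        linarith [hε.2]

lemma tendsto_int_plus {x : ℝ} (hx : 1 < x) :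
    Tendsto (fun ε : ℝ => ∫ t in Ioc (0:ℝ) 1,
        Complex.log (1 - ((x:ℂ) + (ε:ℂ) * Complex.I) * t) / t)
      (nhdsWithin 0 (Ioi 0)) (nhds (∫ t in Ioc (0:ℝ) 1, fplus x t)) := by
  have hIoc : Ioc (0:ℝ) 1 ∈ nhdsWithin (0:ℝ) (Ioi 0) :=
    Ioc_mem_nhdsGT_of_mem ⟨le_refl 0, zero_lt_one⟩
  apply MeasureTheory.tendsto_integral_filter_of_dominated_convergence (rbound x)
  · exact Filter.Eventually.of_forall (fun ε => aesm _)
  · filter_upwards [hIoc] with ε hε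
    filter_upwards [ae_restrict_mem measurableSet_Ioc, ae_ne_one hx] with t ht htne
    exact norm_le_rbound hx (by simp) (norm_z_plus x ε hε hx) ht htne
  · exact integrableOn_rbound hx
  · filter_upwards [ae_restrict_mem measurableSet_Ioc, ae_ne_one hx] with t ht htne
    exact tendsto_plus hx ht htne

lemma tendsto_int_minus {x : ℝ} (hx : 1 < x) :
    Tendsto (fun ε : ℝ => ∫ t in Ioc (0:ℝ) 1,
        Complex.log (1 - ((x:ℂ) - (ε:ℂ) * Complex.I) * t) / t)
      (nhdsWithin 0 (Ioi 0))
      (nhds (∫ t in Ioc (0:ℝ) 1, Complex.log (1 - (x:ℂ) * t) / t)) := by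
  have hIoc : Ioc (0:ℝ) 1 ∈ nhdsWithin (0:ℝ) (Ioi 0) :=
    Ioc_mem_nhdsGT_of_mem ⟨le_refl 0, zero_lt_one⟩
  apply MeasureTheory.tendsto_integral_filter_of_dominated_convergence (rbound x)
  · exact Filter.Eventually.of_forall (fun ε => aesm _)
  · filter_upwards [hIoc] with ε hε
    filter_upwards [ae_restrict_mem measurableSet_Ioc, ae_ne_one hx] with t ht htne
    exact norm_le_rbound hx (by simp) (norm_z_minus x ε hε hx) ht htne
  · exact integrableOn_rbound hx
  · filter_upwards [ae_restrict_mem measurableSet_Ioc, ae_ne_one hx] with t ht htne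
    exact tendsto_minus hx ht htne

lemma fminus_integrable {x : ℝ} (hx : 1 < x) :
    IntegrableOn (fun t : ℝ => Complex.log (1 - (x:ℂ) * t) / t) (Ioc 0 1) := by
  refine Integrable.mono' (integrableOn_rbound hx) (aesm _) ?_
  filter_upwards [ae_restrict_mem measurableSet_Ioc, ae_ne_one hx] with t ht htne
  refine norm_le_rbound hx (by simp) ?_ ht htne
  rw [Complex.norm_real, Real.norm_eq_abs, _root_.abs_of_pos (by linarith : (0:ℝ) < x)]
  linarith

lemma indicator_integrable {x : ℝ} (hx : 1 < x) :
    Integrable ((Ioi (1/x)).indicator (fun s : ℝ => 2 * Real.pi * Complex.I / s))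
      (volume.restrict (Ioc 0 1)) := by
  have hx0 : (0:ℝ) < x := by linarith
  have h1x : (0:ℝ) < 1/x := by positivity
  rw [integrable_indicator_iff measurableSet_Ioi]
  rw [IntegrableOn, Measure.restrict_restrict measurableSet_Ioi]
  have hset : Ioi (1/x) ∩ Ioc (0:ℝ) 1 = Ioc (1/x) 1 := by
    ext t
    simp only [mem_inter_iff, mem_Ioi, mem_Ioc]
    constructor
    · rintro ⟨h1, _, h3⟩; exact ⟨h1, h3⟩
    · rintro ⟨h1, h2⟩; exact ⟨h1, lt_trans h1x h1, h2⟩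
  rw [hset]
  apply IntegrableOn.mono_set (t := Icc (1/x) 1) _ Ioc_subset_Icc_self
  apply ContinuousOn.integrableOn_Icc
  apply ContinuousOn.div continuousOn_const Complex.continuous_ofReal.continuousOn
  intro s hs
  exact Complex.ofReal_ne_zero.2 (ne_of_gt (lt_of_lt_of_le h1x hs.1))

lemma int_diff {x : ℝ} (hx : 1 < x) :
    ∫ t in Ioc (0:ℝ) 1, fplus x t
      = (∫ t in Ioc (0:ℝ) 1, Complex.log (1 - (x:ℂ) * t) / t)
        - 2 * Real.pi * Complex.I * Real.log x := by
  have hx0 : (0:ℝ) < x := by linarith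
  have h1x : (0:ℝ) < 1/x := by positivity
  have h1x1 : (1/x : ℝ) ≤ 1 := by rw [div_le_one hx0]; linarith
  have hsplit : ∫ t in Ioc (0:ℝ) 1, fplus x t
      = (∫ t in Ioc (0:ℝ) 1, Complex.log (1 - (x:ℂ) * t) / t)
        - ∫ t in Ioc (0:ℝ) 1, (Ioi (1/x)).indicator (fun s : ℝ => 2 * Real.pi * Complex.I / s) t :=
    MeasureTheory.integral_sub (fminus_integrable hx) (indicator_integrable hx)
  rw [hsplit]
  congr 1
  rw [MeasureTheory.integral_indicator measurableSet_Ioi]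
  rw [Measure.restrict_restrict measurableSet_Ioi]
  have hset : Ioi (1/x) ∩ Ioc (0:ℝ) 1 = Ioc (1/x) 1 := by
    ext t
    simp only [mem_inter_iff, mem_Ioi, mem_Ioc]
    constructor
    · rintro ⟨h1, _, h3⟩; exact ⟨h1, h3⟩
    · rintro ⟨h1, h2⟩; exact ⟨h1, lt_trans h1x h1, h2⟩
  rw [hset, ← intervalIntegral.integral_of_le h1x1]
  have hfun : ∀ s : ℝ, s ∈ uIcc (1/x) 1 →
      2 * Real.pi * Complex.I / s = (2 * Real.pi * Complex.I) * (((1/s : ℝ)) : ℂ) := by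
    intro s _; push_cast; ring
  rw [intervalIntegral.integral_congr hfun]
  rw [intervalIntegral.integral_const_mul]
  rw [intervalIntegral.integral_ofReal]
  have h0not : (0:ℝ) ∉ uIcc (1/x) 1 := by
    rw [Set.uIcc_of_le h1x1]
    rintro ⟨h1, -⟩
    exact absurd h1 (not_le.2 h1x)
  rw [integral_one_div h0not]
  rw [one_div_one_div]

lemma tendsto_logx_plus {x : ℝ} (hx : 1 < x) :
    Tendsto (fun ε : ℝ => Complex.log ((x:ℂ) + (ε:ℂ) * Complex.I)) (nhdsWithin 0 (Ioi 0))
      (nhds (Complex.log x)) := by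
  have hc : Continuous (fun ε : ℝ => (x:ℂ) + (ε:ℂ) * Complex.I) := by continuity
  have hb := hc.tendsto 0
  simp only [Complex.ofReal_zero, zero_mul, add_zero] at hb
  have hsl : ((x:ℝ) : ℂ) ∈ Complex.slitPlane := by
    left; simp only [Complex.ofReal_re]; linarith
  exact (((continuousAt_clog hsl).tendsto.comp hb)).mono_left nhdsWithin_le_nhds

lemma tendsto_logx_minus {x : ℝ} (hx : 1 < x) :
    Tendsto (fun ε : ℝ => Complex.log ((x:ℂ) - (ε:ℂ) * Complex.I)) (nhdsWithin 0 (Ioi 0))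
      (nhds (Complex.log x)) := by
  have hc : Continuous (fun ε : ℝ => (x:ℂ) - (ε:ℂ) * Complex.I) := by continuity
  have hb := hc.tendsto 0
  simp only [Complex.ofReal_zero, zero_mul, sub_zero] at hb
  have hsl : ((x:ℝ) : ℂ) ∈ Complex.slitPlane := by
    left; simp only [Complex.ofReal_re]; linarith
  exact (((continuousAt_clog hsl).tendsto.comp hb)).mono_left nhdsWithin_le_nhds

lemma tendsto_log1mx_plus {x : ℝ} (hx : 1 < x) :
    Tendsto (fun ε : ℝ => Complex.log (1 - ((x:ℂ) + (ε:ℂ) * Complex.I)))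
      (nhdsWithin 0 (Ioi 0)) (nhds ((Real.log (x-1) : ℂ) - Real.pi * Complex.I)) := by
  have hneg : (1 - x : ℝ) < 0 := by linarith
  have hre : (((1 - x : ℝ)) : ℂ).re < 0 := by simpa using hneg
  have him : (((1 - x : ℝ)) : ℂ).im = 0 := by simp
  have hlog := Complex.tendsto_log_nhdsWithin_im_neg_of_re_neg_of_im_zero hre him
  have hb : Tendsto (fun ε : ℝ => (1:ℂ) - ((x:ℂ) + (ε:ℂ) * Complex.I))
      (nhdsWithin 0 (Ioi 0)) (nhdsWithin (((1 - x : ℝ)) : ℂ) {z : ℂ | z.im < 0}) := by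
    rw [tendsto_nhdsWithin_iff]
    constructor
    · have hc : Continuous (fun ε : ℝ => (1:ℂ) - ((x:ℂ) + (ε:ℂ) * Complex.I)) := by continuity
      have hb := hc.tendsto 0
      simp only [Complex.ofReal_zero, zero_mul, add_zero] at hb
      have h2 : (1:ℂ) - (x:ℂ) = (((1 - x : ℝ)) : ℂ) := by push_cast; ring
      rw [h2] at hb
      exact hb.mono_left nhdsWithin_le_nhds
    · filter_upwards [self_mem_nhdsWithin] with ε hε
      have : (0:ℝ) < ε := hε
      simp only [mem_setOf_eq, Complex.sub_im, Complex.add_im, Complex.one_im,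
        Complex.ofReal_im, Complex.mul_im, Complex.I_re, Complex.I_im, Complex.ofReal_re]
      linarith
  have h := hlog.comp hb
  have habs : ‖(((1 - x : ℝ)) : ℂ)‖ = x - 1 := by
    rw [Complex.norm_real, Real.norm_eq_abs, _root_.abs_of_neg hneg]; ring
  rw [habs] at h
  exact h

lemma tendsto_log1mx_minus {x : ℝ} (hx : 1 < x) :
    Tendsto (fun ε : ℝ => Complex.log (1 - ((x:ℂ) - (ε:ℂ) * Complex.I)))
      (nhdsWithin 0 (Ioi 0)) (nhds ((Real.log (x-1) : ℂ) + Real.pi * Complex.I)) := by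
  have hneg : (1 - x : ℝ) < 0 := by linarith
  have hre : (((1 - x : ℝ)) : ℂ).re < 0 := by simpa using hneg
  have him : (((1 - x : ℝ)) : ℂ).im = 0 := by simp
  have hlog := Complex.tendsto_log_nhdsWithin_im_nonneg_of_re_neg_of_im_zero hre him
  have hb : Tendsto (fun ε : ℝ => (1:ℂ) - ((x:ℂ) - (ε:ℂ) * Complex.I))
      (nhdsWithin 0 (Ioi 0)) (nhdsWithin (((1 - x : ℝ)) : ℂ) {z : ℂ | 0 ≤ z.im}) := by
    rw [tendsto_nhdsWithin_iff]
    constructor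
    · have hc : Continuous (fun ε : ℝ => (1:ℂ) - ((x:ℂ) - (ε:ℂ) * Complex.I)) := by continuity
      have hb := hc.tendsto 0
      simp only [Complex.ofReal_zero, zero_mul, sub_zero] at hb
      have h2 : (1:ℂ) - (x:ℂ) = (((1 - x : ℝ)) : ℂ) := by push_cast; ring
      rw [h2] at hb
      exact hb.mono_left nhdsWithin_le_nhds
    · filter_upwards [self_mem_nhdsWithin] with ε hε
      have : (0:ℝ) < ε := hε
      simp only [mem_setOf_eq, Complex.sub_im, Complex.one_im,
        Complex.ofReal_im, Complex.mul_im, Complex.I_re, Complex.I_im, Complex.ofReal_re]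
      linarith
  have h := hlog.comp hb
  have habs : ‖(((1 - x : ℝ)) : ℂ)‖ = x - 1 := by
    rw [Complex.norm_real, Real.norm_eq_abs, _root_.abs_of_neg hneg]; ring
  rw [habs] at h
  exact h

end RogersAux

noncomputable section

/-- For `x > 1`, the one-sided limits of
`Li₂(x±it) + ½(Log(x±it) + 2πi p)(Log(1−(x±it)) + 2πi q±)` as `t → 0⁺`, with `q₊ = q` and
`q₋ = q+1`, exist and differ by `4π²p`; in particular they are congruent modulo `4π²ℤ`:
well-definedness modulo `4π²ℤ` of the extended Rogers dilogarithm across the cut `(1,∞)`. -/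
theorem rogers_welldefined_pos_cut (x : ℝ) (hx : 1 < x) (p q : ℤ) :
    ∃ Lp Lm : ℂ,
      Tendsto (fun t : ℝ =>
          Li2 ((x : ℂ) + (t : ℂ) * Complex.I)
            + (1/2) * (Complex.log ((x : ℂ) + (t : ℂ) * Complex.I)
                + 2 * Real.pi * Complex.I * p)
              * (Complex.log (1 - ((x : ℂ) + (t : ℂ) * Complex.I))
                + 2 * Real.pi * Complex.I * q))
        (nhdsWithin 0 (Set.Ioi 0)) (nhds Lp) ∧
      Tendsto (fun t : ℝ =>
          Li2 ((x : ℂ) - (t : ℂ) * Complex.I)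
            + (1/2) * (Complex.log ((x : ℂ) - (t : ℂ) * Complex.I)
                + 2 * Real.pi * Complex.I * p)
              * (Complex.log (1 - ((x : ℂ) - (t : ℂ) * Complex.I))
                + 2 * Real.pi * Complex.I * ((q : ℂ) + 1)))
        (nhdsWithin 0 (Set.Ioi 0)) (nhds Lm) ∧
      Lp = Lm + 4 * (Real.pi : ℂ)^2 * p ∧
      ∃ n : ℤ, Lp - Lm = (n : ℂ) * (4 * (Real.pi : ℂ)^2) := by
  have hLi : ∀ z : ℂ, Li2 z = -∫ t in Ioc (0:ℝ) 1, Complex.log (1 - z*t)/t := fun z => by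
    rw [Li2, intervalIntegral.integral_of_le zero_le_one]
  set A : ℂ := -(∫ t in Ioc (0:ℝ) 1, fplus x t)
      + (1/2) * (Complex.log (x:ℂ) + 2*Real.pi*Complex.I*p)
        * (((Real.log (x-1) : ℂ) - Real.pi*Complex.I) + 2*Real.pi*Complex.I*q) with hA
  set B : ℂ := -(∫ t in Ioc (0:ℝ) 1, Complex.log (1 - (x:ℂ)*t)/t)
      + (1/2) * (Complex.log (x:ℂ) + 2*Real.pi*Complex.I*p)
        * (((Real.log (x-1) : ℂ) + Real.pi*Complex.I) + 2*Real.pi*Complex.I*((q:ℂ)+1)) with hB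
  have hlx : Complex.log ((x:ℝ):ℂ) = ((Real.log x : ℝ) : ℂ) :=
    (Complex.ofReal_log (le_of_lt (lt_trans zero_lt_one hx))).symm
  have key : A = B + 4 * (Real.pi : ℂ)^2 * p := by
    rw [hA, hB, int_diff hx, hlx]
    push_cast
    linear_combination (-(4:ℂ)*(Real.pi:ℂ)^2*(p:ℂ)) * Complex.I_sq
  refine ⟨A, B, ?_, ?_, key, ⟨p, by rw [key]; ring⟩⟩
  · simp only [hLi]
    exact ((tendsto_int_plus hx).neg).add
      ((((tendsto_logx_plus hx).add tendsto_const_nhds).const_mul _).mul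
        ((tendsto_log1mx_plus hx).add tendsto_const_nhds))
  · simp only [hLi]
    exact ((tendsto_int_minus hx).neg).add
      ((((tendsto_logx_minus hx).add tendsto_const_nhds).const_mul _).mul
        ((tendsto_log1mx_minus hx).add tendsto_const_nhds))

end
end
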